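/- arXiv:1911.11338 — 6 statements merged into one kernel-verified Lean document; each statement's English description precedes it below -/
import Mathlib

section
/- For a connected undirected weighted graph G with Laplacian L, the disagreement D = x̂ᵀ L x̂ of the steady state x̂ of the two-leader French-DeGroot model with leaders s₀ (opinion 0) and s₁ (opinion 1) equals 1/(b_{s₁,s₀}ᵀ L⁺ b_{s₁,s₀}), i.e., the reciprocal of the effective resistance between s₁ and s₀. -/
/-!
Write `b = e_{s₁} - e_{s₀}`, `y = L⁺ b` and `r = bᵀ L⁺ b`, so that `x̂ = r⁻¹ (y - y_{s₀} 𝟙)`.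
Since `L 𝟙 = 0` and `L` is symmetric, shifting by a constant does not change the quadratic form
of `L`, and the Moore–Penrose identity `L⁺ L L⁺ = L⁺` (with `L⁺` symmetric) gives
`yᵀ L y = bᵀ L⁺ b = r`. Hence `x̂ᵀ L x̂ = r⁻² r = 1 / r`; for `r = 0` both sides are `0`.
-/

open Matrix

noncomputable section

/-- Moore–Penrose pseudoinverse conditions. -/
def IsMoorePenrose {V : Type*} [Fintype V] [DecidableEq V]
    (L Lp : Matrix V V ℝ) : Prop :=
  L * Lp * L = L ∧ Lp * L * Lp = Lp ∧ (L * Lp)ᵀ = L * Lp ∧ (Lp * L)ᵀ = Lp * L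

/-- Laplacian of a weighted graph given by weight function `w`. -/
def lapOf {V : Type*} [Fintype V] [DecidableEq V] (w : V → V → ℝ) : Matrix V V ℝ :=
  Matrix.of fun i j => if i = j then ∑ k, w i k else - w i j

/-- The vector `e_u - e_v`. -/
def bvec {V : Type*} [DecidableEq V] (u v : V) : V → ℝ :=
  Pi.single u 1 - Pi.single v 1

namespace IsMoorePenrose

variable {V : Type*} [Fintype V] [DecidableEq V] {L A B : Matrix V V ℝ}

theorem mul_left_eq (hA : IsMoorePenrose L A) (hB : IsMoorePenrose L B) : L * A = L * B := by
  obtain ⟨hA1, -, hA3, -⟩ := hA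
  obtain ⟨hB1, -, hB3, -⟩ := hB
  calc L * A = Aᵀ * Lᵀ := by rw [← transpose_mul, hA3]
    _ = Aᵀ * (L * B * L)ᵀ := by rw [hB1]
    _ = (L * A)ᵀ * (L * B)ᵀ := by simp only [transpose_mul, Matrix.mul_assoc]
    _ = L * A * L * B := by rw [hA3, hB3]; simp only [Matrix.mul_assoc]
    _ = L * B := by rw [hA1]

theorem mul_right_eq (hA : IsMoorePenrose L A) (hB : IsMoorePenrose L B) : A * L = B * L := by
  obtain ⟨hA1, -, -, hA4⟩ := hA
  obtain ⟨hB1, -, -, hB4⟩ := hB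
  calc A * L = Lᵀ * Aᵀ := by rw [← transpose_mul, hA4]
    _ = (L * B * L)ᵀ * Aᵀ := by rw [hB1]
    _ = (B * L)ᵀ * (A * L)ᵀ := by simp only [transpose_mul, Matrix.mul_assoc]
    _ = B * (L * A * L) := by rw [hB4, hA4]; simp only [Matrix.mul_assoc]
    _ = B * L := by rw [hA1]

theorem unique (hA : IsMoorePenrose L A) (hB : IsMoorePenrose L B) : A = B :=
  calc A = A * L * A := hA.2.1.symm
    _ = B * (L * B) := by rw [mul_right_eq hA hB, Matrix.mul_assoc, mul_left_eq hA hB]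
    _ = B := by rw [← Matrix.mul_assoc, hB.2.1]

theorem transpose (hL : L.IsSymm) (hA : IsMoorePenrose L A) : IsMoorePenrose L Aᵀ := by
  obtain ⟨h1, h2, h3, h4⟩ := hA
  have hLA : L * Aᵀ = (A * L)ᵀ := by rw [transpose_mul, hL.eq]
  have hAL : Aᵀ * L = (L * A)ᵀ := by rw [transpose_mul, hL.eq]
  refine ⟨?_, ?_, ?_, ?_⟩
  · simpa [transpose_mul, hL.eq, Matrix.mul_assoc] using congrArg (·ᵀ) h1
  · simpa [transpose_mul, hL.eq, Matrix.mul_assoc] using congrArg (·ᵀ) h2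
  · rw [hLA, transpose_transpose, h4]
  · rw [hAL, transpose_transpose, h3]

theorem isSymm (hL : L.IsSymm) (hA : IsMoorePenrose L A) : A.IsSymm :=
  unique (hA.transpose hL) hA

theorem dotProduct_mulVec_mulVec (hL : L.IsSymm) (hA : IsMoorePenrose L A) (b : V → ℝ) :
    A *ᵥ b ⬝ᵥ L *ᵥ (A *ᵥ b) = b ⬝ᵥ A *ᵥ b := by
  calc A *ᵥ b ⬝ᵥ L *ᵥ (A *ᵥ b) = b ᵥ* A ⬝ᵥ L *ᵥ (A *ᵥ b) := by
        rw [← mulVec_transpose, (hA.isSymm hL).eq]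
    _ = b ⬝ᵥ (A * L * A) *ᵥ b := by rw [← dotProduct_mulVec, mulVec_mulVec, mulVec_mulVec]
    _ = b ⬝ᵥ A *ᵥ b := by rw [hA.2.1]

end IsMoorePenrose

section Laplacian

variable {V : Type*} [Fintype V] [DecidableEq V] {w : V → V → ℝ}

theorem lapOf_isSymm (hw : ∀ i j, w i j = w j i) : (lapOf w).IsSymm := by
  refine IsSymm.ext fun i j => ?_
  by_cases h : i = j
  · simp [lapOf, h]
  · simp [lapOf, h, Ne.symm h, hw i j]

theorem lapOf_mulVec_one (hw0 : ∀ i, w i i = 0) : lapOf w *ᵥ 1 = 0 := by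
  funext i
  have hrow : ∀ j, lapOf w i j = (if i = j then ∑ k, w i k else 0) - w i j := by
    intro j
    by_cases h : i = j
    · subst h; simp [lapOf, hw0]
    · simp [lapOf, h]
  simp [mulVec, dotProduct, hrow, Finset.sum_sub_distrib]

end Laplacian

theorem bvec_dotProduct {V : Type*} [Fintype V] [DecidableEq V] (u v : V) (y : V → ℝ) :
    bvec u v ⬝ᵥ y = y u - y v := by
  simp [bvec, sub_dotProduct]

theorem dotProduct_mulVec_sub_const {V : Type*} [Fintype V] {L : Matrix V V ℝ}
    (hL : L.IsSymm) (hL1 : L *ᵥ 1 = 0) (x : V → ℝ) (c : ℝ) :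
    (x - c • 1) ⬝ᵥ L *ᵥ (x - c • 1) = x ⬝ᵥ L *ᵥ x := by
  have hshift : L *ᵥ (x - c • 1) = L *ᵥ x := by
    rw [mulVec_sub, mulVec_smul, hL1, smul_zero, sub_zero]
  have hone : 1 ⬝ᵥ L *ᵥ x = 0 := by
    rw [dotProduct_mulVec, ← mulVec_transpose, hL.eq, hL1, zero_dotProduct]
  rw [hshift, sub_dotProduct, smul_dotProduct, hone, smul_zero, sub_zero]

theorem disagreement_eq_inv_resistance_general {n : ℕ}
    (w : Fin n → Fin n → ℝ) (L Lp : Matrix (Fin n) (Fin n) ℝ)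
    (hw0 : ∀ i, w i i = 0) (hwsymm : ∀ i j, w i j = w j i)
    (hL : L = lapOf w)
    (hMP : IsMoorePenrose L Lp)
    (s0 s1 : Fin n)
    (xhat : Fin n → ℝ)
    (hx : xhat = fun v =>
      (bvec v s0 ⬝ᵥ Lp *ᵥ bvec s1 s0) / (bvec s1 s0 ⬝ᵥ Lp *ᵥ bvec s1 s0)) :
    xhat ⬝ᵥ L *ᵥ xhat = 1 / (bvec s1 s0 ⬝ᵥ Lp *ᵥ bvec s1 s0) := by
  have hLsymm : L.IsSymm := hL ▸ lapOf_isSymm hwsymm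
  set y := Lp *ᵥ bvec s1 s0
  set r := bvec s1 s0 ⬝ᵥ y
  have hxhat : xhat = r⁻¹ • (y - y s0 • 1) := by
    funext v
    simp [hx, bvec_dotProduct, div_eq_inv_mul]
  calc xhat ⬝ᵥ L *ᵥ xhat = r⁻¹ * r⁻¹ * (y ⬝ᵥ L *ᵥ y) := by
        rw [hxhat, mulVec_smul, smul_dotProduct, dotProduct_smul,
          dotProduct_mulVec_sub_const hLsymm (hL ▸ lapOf_mulVec_one hw0), smul_eq_mul,
          smul_eq_mul, mul_assoc]
    _ = r⁻¹ * r⁻¹ * r := by rw [hMP.dotProduct_mulVec_mulVec hLsymm]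
    _ = 1 / r := by
        rcases eq_or_ne r 0 with hr | hr
        · simp [hr]
        · field_simp

theorem disagreement_eq_inv_resistance {n : ℕ}
    (w : Fin n → Fin n → ℝ) (L Lp : Matrix (Fin n) (Fin n) ℝ)
    (hw0 : ∀ i, w i i = 0) (hwsymm : ∀ i j, w i j = w j i) (hwnn : ∀ i j, 0 ≤ w i j)
    (hL : L = lapOf w)
    (hconn : ∀ x : Fin n → ℝ, L *ᵥ x = 0 → ∃ c : ℝ, x = fun _ => c)
    (hMP : IsMoorePenrose L Lp)
    (s0 s1 : Fin n) (hs : s0 ≠ s1)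
    (xhat : Fin n → ℝ)
    (hx : xhat = fun v =>
      (bvec v s0 ⬝ᵥ Lp *ᵥ bvec s1 s0) / (bvec s1 s0 ⬝ᵥ Lp *ᵥ bvec s1 s0)) :
    xhat ⬝ᵥ L *ᵥ xhat = 1 / (bvec s1 s0 ⬝ᵥ Lp *ᵥ bvec s1 s0) :=
  disagreement_eq_inv_resistance_general w L Lp hw0 hwsymm hL hMP s0 s1 xhat hx
end
end

section
/- For a connected undirected weighted graph G with Laplacian L and two-leader French-DeGroot steady state x̂, the polarization P = x̂ᵀ J x̂ (where J = I − (1/n) 1 1ᵀ) equals (b_{s₁,s₀}ᵀ L²⁺ b_{s₁,s₀}) / (b_{s₁,s₀}ᵀ L⁺ b_{s₁,s₀})², i.e., P = (d_B(s₁,s₀)/r_{s₁,s₀})² where d_B is the biharmonic distance and r is the resistance distance. -/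
open Matrix

noncomputable section

/-- The all-ones matrix. -/
def onesM (V : Type*) [Fintype V] : Matrix V V ℝ := Matrix.of fun _ _ => 1

/-- Uniqueness of the Moore–Penrose pseudoinverse. -/
lemma mp_unique {n : Type*} [Fintype n] [DecidableEq n] (M A B : Matrix n n ℝ)
    (hA1 : M*A*M = M) (hA2 : A*M*A = A) (hA3 : (M*A)ᵀ = M*A) (hA4 : (A*M)ᵀ = A*M)
    (hB1 : M*B*M = M) (hB2 : B*M*B = B) (hB3 : (M*B)ᵀ = M*B) (hB4 : (B*M)ᵀ = B*M) :
    A = B := by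
  have h1 : A = A * M * B := by
    calc A = A*(M*A) := by rw [← Matrix.mul_assoc, hA2]
    _ = A*(M*A)ᵀ := by rw [hA3]
    _ = A*(Aᵀ*(M*B*M)ᵀ) := by rw [hB1]; simp only [Matrix.transpose_mul, Matrix.mul_assoc]
    _ = A*(Aᵀ*(Mᵀ*(M*B)ᵀ)) := by simp only [Matrix.transpose_mul, Matrix.mul_assoc]
    _ = A*(Aᵀ*(Mᵀ*(M*B))) := by rw [hB3]
    _ = (A*(M*A)ᵀ)*(M*B) := by simp only [Matrix.transpose_mul, Matrix.mul_assoc]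
    _ = (A*(M*A))*(M*B) := by rw [hA3]
    _ = A*(M*B) := by rw [← Matrix.mul_assoc A M A, hA2]
    _ = A*M*B := by rw [Matrix.mul_assoc]
  have h2 : B = A * M * B := by
    calc B = (B*M)*B := hB2.symm
    _ = (B*M)ᵀ*B := by rw [hB4]
    _ = (M*A*M)ᵀ*(Bᵀ*B) := by rw [hA1]; simp only [Matrix.transpose_mul, Matrix.mul_assoc]
    _ = (A*M)ᵀ*((B*M)ᵀ*B) := by simp only [Matrix.transpose_mul, Matrix.mul_assoc]
    _ = (A*M)*((B*M)*B) := by rw [hA4, hB4]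
    _ = A*M*B := by rw [hB2]
  rw [h1, ← h2]

theorem polarization_eq_biharmonic_over_resistance_sq {n : ℕ}
    (w : Fin n → Fin n → ℝ) (L Lp : Matrix (Fin n) (Fin n) ℝ)
    (hw0 : ∀ i, w i i = 0) (hwsymm : ∀ i j, w i j = w j i) (hwnn : ∀ i j, 0 ≤ w i j)
    (hL : L = lapOf w)
    (hconn : ∀ x : Fin n → ℝ, L *ᵥ x = 0 → ∃ c : ℝ, x = fun _ => c)
    (hMP : IsMoorePenrose L Lp)
    (s0 s1 : Fin n) (hs : s0 ≠ s1)
    (J : Matrix (Fin n) (Fin n) ℝ)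
    (hJ : J = (1 : Matrix (Fin n) (Fin n) ℝ) - (n : ℝ)⁻¹ • onesM (Fin n))
    (xhat : Fin n → ℝ)
    (hx : xhat = fun v =>
      (bvec v s0 ⬝ᵥ Lp *ᵥ bvec s1 s0) / (bvec s1 s0 ⬝ᵥ Lp *ᵥ bvec s1 s0)) :
    xhat ⬝ᵥ J *ᵥ xhat =
      (bvec s1 s0 ⬝ᵥ (Lp * Lp) *ᵥ bvec s1 s0) /
        (bvec s1 s0 ⬝ᵥ Lp *ᵥ bvec s1 s0) ^ 2 := by
  obtain ⟨h1, h2, h3, h4⟩ := hMP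
  have hn : (n : ℝ) ≠ 0 := Nat.cast_ne_zero.2 (Nat.pos_iff_ne_zero.1 s0.pos)
  -- symmetry of L
  have hLs : Lᵀ = L := by
    rw [hL]; ext i j
    simp only [lapOf, transpose_apply, of_apply]
    by_cases h : i = j
    · subst h; rfl
    · rw [if_neg h, if_neg (Ne.symm h), hwsymm]
  -- symmetry of Lp
  have hLps : Lpᵀ = Lp := by
    refine (mp_unique L Lp Lpᵀ h1 h2 h3 h4 ?_ ?_ ?_ ?_).symm
    · calc L*Lpᵀ*L = (Lᵀ*Lp*Lᵀ)ᵀ := by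
            simp only [Matrix.transpose_mul, Matrix.transpose_transpose, Matrix.mul_assoc]
      _ = (L*Lp*L)ᵀ := by rw [hLs]
      _ = Lᵀ := by rw [h1]
      _ = L := hLs
    · calc Lpᵀ*L*Lpᵀ = (Lp*Lᵀ*Lp)ᵀ := by
            simp only [Matrix.transpose_mul, Matrix.transpose_transpose, Matrix.mul_assoc]
      _ = (Lp*L*Lp)ᵀ := by rw [hLs]
      _ = Lpᵀ := by rw [h2]
    · have e : L*Lpᵀ = Lp*L := by
        calc L*Lpᵀ = (Lp*Lᵀ)ᵀ := by
              simp only [Matrix.transpose_mul, Matrix.transpose_transpose]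
        _ = (Lp*L)ᵀ := by rw [hLs]
        _ = Lp*L := h4
      rw [e]; exact h4
    · have e : Lpᵀ*L = L*Lp := by
        calc Lpᵀ*L = (Lᵀ*Lp)ᵀ := by
              simp only [Matrix.transpose_mul, Matrix.transpose_transpose]
        _ = (L*Lp)ᵀ := by rw [hLs]
        _ = L*Lp := h3
      rw [e]; exact h3
  have hcomm : L * Lp = Lp * L := by
    calc L*Lp = (Lp*L)ᵀ := by rw [Matrix.transpose_mul, hLs, hLps]
    _ = Lp*L := h4
  -- L annihilates the constant vector
  have hL1 : L *ᵥ (fun _ => (1:ℝ)) = 0 := by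
    rw [hL]; funext i
    simp only [mulVec, dotProduct, lapOf, of_apply, mul_one, Pi.zero_apply]
    have key : ∀ j, (if i = j then ∑ k, w i k else - w i j)
        = (if i = j then ∑ k, w i k else 0) - w i j := by
      intro j; by_cases h : i = j
      · subst h; simp [hw0]
      · simp [h]
    rw [Finset.sum_congr rfl (fun j _ => key j), Finset.sum_sub_distrib]
    simp
  -- Lp annihilates the constant vector
  have hLp1 : Lp *ᵥ (fun _ => (1:ℝ)) = 0 := by
    have e : Lp = Lp * Lp * L := by
      calc Lp = Lp*(L*Lp) := by rw [← Matrix.mul_assoc, h2]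
      _ = Lp*(Lp*L) := by rw [hcomm]
      _ = Lp*Lp*L := by rw [Matrix.mul_assoc]
    rw [e, ← Matrix.mulVec_mulVec, hL1, Matrix.mulVec_zero]
  set b : Fin n → ℝ := bvec s1 s0 with hb
  set y : Fin n → ℝ := Lp *ᵥ b with hy
  set r : ℝ := b ⬝ᵥ y with hrdef
  -- sum of y is zero
  have hsum : ∑ v, y v = 0 := by
    have e1 : ∑ v, y v = (fun _ => (1:ℝ)) ⬝ᵥ y := by simp [dotProduct]
    have e2 : (fun _ => (1:ℝ)) ᵥ* Lp = 0 := by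
      rw [← hLps, Matrix.vecMul_transpose, hLp1]
    rw [e1, hy, Matrix.dotProduct_mulVec, e2, zero_dotProduct]
  have hyv : ∀ v, bvec v s0 ⬝ᵥ y = y v - y s0 := by
    intro v
    simp [bvec, sub_dotProduct, single_dotProduct]
  have hxv : ∀ v, xhat v = (y v - y s0) / r := by
    intro v; rw [hx]; simp only []; rw [hyv]
  -- numerator of RHS
  have hnum : b ⬝ᵥ (Lp * Lp) *ᵥ b = ∑ v, y v * y v := by
    calc b ⬝ᵥ (Lp * Lp) *ᵥ b = b ⬝ᵥ Lp *ᵥ y := by rw [hy, Matrix.mulVec_mulVec]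
    _ = (b ᵥ* Lp) ⬝ᵥ y := Matrix.dotProduct_mulVec _ _ _
    _ = y ⬝ᵥ y := by rw [← hLps, Matrix.vecMul_transpose, ← hy]
    _ = ∑ v, y v * y v := rfl
  -- LHS as sums
  have hJmul : J *ᵥ xhat = fun v => xhat v - (n:ℝ)⁻¹ * ∑ u, xhat u := by
    rw [hJ]
    funext v
    simp only [Matrix.sub_mulVec, Matrix.smul_mulVec, Matrix.one_mulVec,
      Pi.sub_apply, Pi.smul_apply, smul_eq_mul]
    congr 1
    simp [onesM, mulVec, dotProduct]
  have hLHS : xhat ⬝ᵥ J *ᵥ xhat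
      = (∑ v, xhat v * xhat v) - (n:ℝ)⁻¹ * (∑ u, xhat u) * (∑ u, xhat u) := by
    rw [hJmul]
    simp only [dotProduct]
    rw [Finset.sum_congr rfl (fun v _ => mul_sub (xhat v) (xhat v) ((n:ℝ)⁻¹ * ∑ u, xhat u)),
      Finset.sum_sub_distrib, ← Finset.sum_mul]
    ring
  by_cases hr : r = 0
  · have hx0 : xhat = 0 := by
      funext v; rw [hxv v, hr, div_zero]; rfl
    rw [hx0, hr]
    simp
  · -- r ≠ 0
    have hS : ∑ u, xhat u = -((n:ℝ) * y s0) / r := by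
      calc ∑ u, xhat u = ∑ u, (y u - y s0) / r := by
            exact Finset.sum_congr rfl fun u _ => hxv u
      _ = (∑ u, (y u - y s0)) / r := by rw [Finset.sum_div]
      _ = (∑ u, y u - ∑ _u : Fin n, y s0) / r := by rw [Finset.sum_sub_distrib]
      _ = -((n:ℝ) * y s0) / r := by
            rw [hsum, Finset.sum_const, Finset.card_fin, nsmul_eq_mul]; ring_nf
    have hQ : ∑ v, xhat v * xhat v
        = ((∑ v, y v * y v) + (n:ℝ) * (y s0 * y s0)) / r ^ 2 := by
      have e : ∀ v, xhat v * xhat v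
          = (y v * y v) / r ^ 2 - (2 * y s0 / r ^ 2) * y v + (y s0 * y s0) / r ^ 2 := by
        intro v; rw [hxv v]; field_simp; ring
      rw [Finset.sum_congr rfl (fun v _ => e v), Finset.sum_add_distrib,
        Finset.sum_sub_distrib, ← Finset.sum_div, ← Finset.mul_sum, hsum,
        Finset.sum_const, Finset.card_fin, nsmul_eq_mul]
      ring
    rw [hLHS, hS, hQ, hnum]
    field_simp
    ring
end
end

section
/- If in a connected undirected weighted graph two distinct nodes s₀ and s₁ satisfy L b_{s₁,s₀} = h · b_{s₁,s₀} for some scalar h > 0 (e.g., when s₀ and s₁ have identical neighborhoods with identical edge weights), then the French-DeGroot polarization P achieves its minimum value P = 1/2. -/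
open Matrix

noncomputable section

lemma bvec_dot {n : ℕ} (u v : Fin n) (x : Fin n → ℝ) :
    bvec u v ⬝ᵥ x = x u - x v := by
  simp [bvec, dotProduct, sub_mul, Finset.sum_sub_distrib, Pi.single_apply,
    ite_mul, Finset.sum_ite_eq]

lemma lap_ones {n : ℕ} (w : Fin n → Fin n → ℝ) (hw0 : ∀ i, w i i = 0) :
    lapOf w *ᵥ (fun _ => (1:ℝ)) = 0 := by
  funext i
  simp only [lapOf, mulVec, dotProduct, of_apply, mul_one, Pi.zero_apply]
  have key : ∀ x : Fin n, (if i = x then ∑ k, w i k else -w i x)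
      = (if i = x then (∑ k, w i k) + w i x else 0) - w i x := by
    intro x
    by_cases hx : i = x
    · subst hx; simp [hw0]
    · simp [hx]
  rw [Finset.sum_congr rfl (fun x _ => key x), Finset.sum_sub_distrib,
    Finset.sum_ite_eq]
  simp [hw0]

theorem polarization_eq_half_of_eigenvector {n : ℕ}
    (w : Fin n → Fin n → ℝ) (L Lp : Matrix (Fin n) (Fin n) ℝ)
    (hw0 : ∀ i, w i i = 0) (hwsymm : ∀ i j, w i j = w j i) (hwnn : ∀ i j, 0 ≤ w i j)
    (hL : L = lapOf w)
    (hconn : ∀ x : Fin n → ℝ, L *ᵥ x = 0 → ∃ c : ℝ, x = fun _ => c)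
    (hMP : IsMoorePenrose L Lp)
    (s0 s1 : Fin n) (hs : s0 ≠ s1)
    (h : ℝ) (hh : 0 < h)
    (heig : L *ᵥ bvec s1 s0 = h • bvec s1 s0) :
    (bvec s1 s0 ⬝ᵥ (Lp * Lp) *ᵥ bvec s1 s0) /
        (bvec s1 s0 ⬝ᵥ Lp *ᵥ bvec s1 s0) ^ 2 = 1 / 2 := by
  set b := bvec s1 s0 with hb
  set y := Lp *ᵥ b with hy
  have hh' : h ≠ 0 := ne_of_gt hh
  -- L is symmetric
  have hLsym : Lᵀ = L := by
    subst hL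
    ext i j
    simp only [transpose_apply, lapOf, of_apply]
    by_cases hij : i = j
    · simp [hij]
    · simp [hij, Ne.symm hij, hwsymm]
  -- L *ᵥ ones = 0
  have hLone : L *ᵥ (fun _ => (1:ℝ)) = 0 := hL ▸ lap_ones w hw0
  -- L y = b
  have hLy : L *ᵥ y = b := by
    have h1 : (L * Lp * L) *ᵥ b = L *ᵥ b := by rw [hMP.1]
    rw [← mulVec_mulVec, ← mulVec_mulVec, heig, mulVec_smul, mulVec_smul] at h1
    exact smul_right_injective (Fin n → ℝ) hh' h1
  -- y = h⁻¹ • b + const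
  have hker : L *ᵥ (y - h⁻¹ • b) = 0 := by
    rw [mulVec_sub, hLy, mulVec_smul, heig, smul_smul, inv_mul_cancel₀ hh', one_smul, sub_self]
  obtain ⟨c, hc⟩ := hconn _ hker
  have hyc : ∀ i, y i = h⁻¹ * b i + c := by
    intro i
    have := congrFun hc i
    simp only [Pi.sub_apply, Pi.smul_apply, smul_eq_mul] at this
    linarith
  have hy2 : y = h⁻¹ • b + c • (fun _ => (1:ℝ)) := by
    funext i
    simp only [Pi.add_apply, Pi.smul_apply, smul_eq_mul, mul_one]
    exact hyc i
  -- z = Lp ones is constant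
  set z := Lp *ᵥ (fun _ => (1:ℝ)) with hz
  have hLz : L *ᵥ z = 0 := by
    have h2 : (L * Lp) *ᵥ (fun _ => (1:ℝ)) = ((L * Lp)ᵀ) *ᵥ (fun _ => (1:ℝ)) := by
      rw [hMP.2.2.1]
    rw [transpose_mul, hLsym, ← mulVec_mulVec, ← mulVec_mulVec, hLone, mulVec_zero] at h2
    exact h2
  obtain ⟨d, hd⟩ := hconn _ hLz
  have hzd : ∀ i, z i = d := fun i => congrFun hd i
  -- values of b
  have hbs1 : b s1 = 1 := by
    simp [hb, bvec, Pi.single_apply, Ne.symm hs]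
  have hbs0 : b s0 = -1 := by
    simp [hb, bvec, Pi.single_apply, hs]
  -- denominator
  have hden : b ⬝ᵥ y = 2 / h := by
    rw [hb, bvec_dot, hyc, hyc, hbs1, hbs0]
    field_simp
    norm_num
  -- Lp *ᵥ y
  have hLpy : Lp *ᵥ y = h⁻¹ • y + c • z := by
    calc Lp *ᵥ y = Lp *ᵥ (h⁻¹ • b + c • fun _ => (1:ℝ)) := by rw [← hy2]
      _ = h⁻¹ • (Lp *ᵥ b) + c • (Lp *ᵥ fun _ => (1:ℝ)) := by
          rw [mulVec_add, mulVec_smul, mulVec_smul]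
      _ = h⁻¹ • y + c • z := rfl
  -- numerator
  have hnum : b ⬝ᵥ (Lp *ᵥ y) = 2 / h ^ 2 := by
    rw [hLpy, hb, bvec_dot]
    simp only [Pi.add_apply, Pi.smul_apply, smul_eq_mul]
    rw [hyc, hyc, hbs1, hbs0, hzd, hzd]
    field_simp
    ring
  rw [← mulVec_mulVec, ← hy, hnum, hden]
  field_simp
end
end

section
/- Let L_C = n I − 1 1ᵀ be the Laplacian of the unweighted complete graph on n nodes, and let H be a connected weighted graph on the same vertex set whose Laplacian L_H satisfies L_C ⪯ L_H ⪯ (1+ε) L_C for some ε ≥ 0. Then for any distinct leaders s₀, s₁, the French-DeGroot polarization of H satisfies 1/2 ≤ P ≤ (1+ε)²/2. -/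
/-!
Write `b = e_{s₁} - e_{s₀}` and `y = L_H⁺ b`, so that `P = ‖y‖² / ⟨b, y⟩²`. Since `L_C ⪯ L_H`,
`ker L_H ⊆ ker L_C`, and `b` is orthogonal to `ker L_C`; hence `L_H y = b`. Since `L_H ⪯ (1+ε) L_C`,
the all-ones vector lies in `ker L_H`, so `y ⟂ 𝟙`. Cauchy–Schwarz `⟨b, y⟩² ≤ ‖b‖² ‖y‖² = 2 ‖y‖²`
gives `P ≥ 1/2`. For the upper bound, `n ‖y‖² = yᵀ L_C y ≤ yᵀ L_H y = ⟨b, y⟩`, and Cauchy–Schwarz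
for the form `L_H` gives `4 = (bᵀ L_H y)² ≤ (bᵀ L_H b)(yᵀ L_H y) ≤ 2 (1+ε) n ⟨b, y⟩`; together
`P ≤ 1 / (n ⟨b, y⟩) ≤ (1+ε)/2`.
-/

open Matrix

noncomputable section

namespace Matrix

variable {V : Type*} [Fintype V]

theorem dotProduct_mulVec_le_of_posSemidef_sub {A B : Matrix V V ℝ} (h : (A - B).PosSemidef)
    (x : V → ℝ) : x ⬝ᵥ B *ᵥ x ≤ x ⬝ᵥ A *ᵥ x := by
  have := h.dotProduct_mulVec_nonneg x
  rw [star_trivial, sub_mulVec, dotProduct_sub] at this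
  linarith

theorem mulVec_eq_zero_of_posSemidef_sub {A B : Matrix V V ℝ} (hB : B.PosSemidef)
    (h : (A - B).PosSemidef) {x : V → ℝ} (hx : A *ᵥ x = 0) : B *ᵥ x = 0 := by
  refine (hB.dotProduct_mulVec_zero_iff x).mp (le_antisymm ?_ (hB.dotProduct_mulVec_nonneg x))
  simpa [hx] using dotProduct_mulVec_le_of_posSemidef_sub h x

theorem PosSemidef.sq_dotProduct_mulVec_le {M : Matrix V V ℝ} (hM : M.PosSemidef)
    (u v : V → ℝ) : (u ⬝ᵥ M *ᵥ v) ^ 2 ≤ (u ⬝ᵥ M *ᵥ u) * (v ⬝ᵥ M *ᵥ v) := by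
  classical
  have hsymm : v ⬝ᵥ M *ᵥ u = u ⬝ᵥ M *ᵥ v := by
    rw [dotProduct_mulVec, ← mulVec_transpose, (isHermitian_iff_isSymm.mp hM.isHermitian).eq,
      dotProduct_comm]
  simpa only [toBilin'_apply', hsymm, ← sq] using
    (toBilin' M).apply_mul_apply_le_of_forall_zero_le
      (fun x => by simpa [toBilin'_apply'] using hM.dotProduct_mulVec_nonneg x) u v

end Matrix

namespace IsMoorePenrose

variable {V : Type*} [Fintype V] [DecidableEq V] {L Lp : Matrix V V ℝ}

theorem mul_comm (hL : L.IsSymm) (h : IsMoorePenrose L Lp) : L * Lp = Lp * L := by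
  obtain ⟨hLLpL, -, hLLp, hLpL⟩ := h
  have e₁ : Lpᵀ * L = L * Lp := by rw [← hLLp, transpose_mul, hL.eq]
  have e₂ : L * Lpᵀ = Lp * L := by rw [← hLpL, transpose_mul, hL.eq]
  calc L * Lp = Lpᵀ * (L * Lp * L) := by rw [hLLpL, e₁]
    _ = (Lpᵀ * L) * (Lp * L) := by simp only [Matrix.mul_assoc]
    _ = (L * Lp * L) * Lpᵀ := by rw [e₁, ← e₂]; simp only [Matrix.mul_assoc]
    _ = Lp * L := by rw [hLLpL, e₂]

theorem isSymm_s5 (hL : L.IsSymm) (h : IsMoorePenrose L Lp) : Lp.IsSymm := by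
  have e₁ : Lpᵀ * L = L * Lp := by rw [← h.2.2.1, transpose_mul, hL.eq]
  calc Lpᵀ = (Lp * L * Lp)ᵀ := by rw [h.2.1]
    _ = L * Lp * Lp := by rw [transpose_mul, h.2.2.2, ← h.mul_comm hL, ← Matrix.mul_assoc, e₁]
    _ = Lp := by rw [h.mul_comm hL, h.2.1]

theorem dotProduct_mulVec_eq_zero (h : IsMoorePenrose L Lp) {x : V → ℝ} (hx : L *ᵥ x = 0)
    (v : V → ℝ) : x ⬝ᵥ Lp *ᵥ v = 0 := by
  rw [← h.2.1, ← mulVec_mulVec, dotProduct_mulVec, ← mulVec_transpose, h.2.2.2,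
    ← mulVec_mulVec, hx, mulVec_zero, zero_dotProduct]

theorem mulVec_mulVec_eq_self (hL : L.IsSymm) (h : IsMoorePenrose L Lp) {v : V → ℝ}
    (hv : ∀ x, L *ᵥ x = 0 → x ⬝ᵥ v = 0) : L *ᵥ Lp *ᵥ v = v := by
  -- `w ∈ ker L` is orthogonal to `v` by `hv`, and to `L *ᵥ Lp *ᵥ v` since `L * Lp` is symmetric.
  set w := v - L *ᵥ Lp *ᵥ v
  have hLw : L *ᵥ w = 0 := by
    rw [mulVec_sub, mulVec_mulVec, mulVec_mulVec, Matrix.mul_assoc L L,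
      h.mul_comm hL, ← Matrix.mul_assoc, h.1, sub_self]
  have hw : w ⬝ᵥ w = 0 := by
    rw [dotProduct_sub, hv w hLw, mulVec_mulVec, dotProduct_mulVec, ← mulVec_transpose,
      h.2.2.1, h.mul_comm hL, ← mulVec_mulVec, hLw, mulVec_zero, zero_dotProduct, sub_zero]
  exact (sub_eq_zero.mp (dotProduct_self_eq_zero.mp hw)).symm

end IsMoorePenrose

theorem sum_bvec {V : Type*} [Fintype V] [DecidableEq V] (u v : V) : ∑ i, bvec u v i = 0 := by
  simp [bvec]

theorem bvec_dotProduct_self {V : Type*} [Fintype V] [DecidableEq V] {u v : V} (h : u ≠ v) :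
    bvec u v ⬝ᵥ bvec u v = 2 := by
  norm_num [bvec, dotProduct_sub, h, h.symm]

def completeLap (V : Type*) [Fintype V] [DecidableEq V] : Matrix V V ℝ :=
  (Fintype.card V : ℝ) • 1 - onesM V

section completeLap

variable {V : Type*} [Fintype V] [DecidableEq V]

theorem completeLap_mulVec (x : V → ℝ) :
    completeLap V *ᵥ x = (Fintype.card V : ℝ) • x - (∑ i, x i) • 1 := by
  rw [completeLap, sub_mulVec, smul_mulVec, one_mulVec]
  congr 1
  ext i
  simp [onesM, mulVec, dotProduct]

theorem dotProduct_completeLap_mulVec (x : V → ℝ) :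
    x ⬝ᵥ completeLap V *ᵥ x = Fintype.card V * (x ⬝ᵥ x) - (∑ i, x i) ^ 2 := by
  rw [completeLap_mulVec, dotProduct_sub, dotProduct_smul, dotProduct_smul, dotProduct_one,
    smul_eq_mul, smul_eq_mul, sq]

theorem completeLap_mulVec_one : completeLap V *ᵥ 1 = 0 := by
  simp [completeLap_mulVec]

theorem posSemidef_completeLap : (completeLap V).PosSemidef := by
  refine .of_dotProduct_mulVec_nonneg ?_ fun x => ?_
  · rw [isHermitian_iff_isSymm]
    exact (isSymm_one.smul _).sub (IsSymm.ext fun _ _ => rfl)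
  · rw [star_trivial, dotProduct_completeLap_mulVec, sub_nonneg]
    simpa [dotProduct, sq] using sq_sum_le_card_mul_sum_sq (s := Finset.univ) (f := x)

theorem dotProduct_eq_zero_of_completeLap_mulVec_eq_zero [Nonempty V] {x v : V → ℝ}
    (hv : ∑ i, v i = 0) (hx : completeLap V *ᵥ x = 0) : x ⬝ᵥ v = 0 := by
  rw [completeLap_mulVec, sub_eq_zero] at hx
  have := congrArg (· ⬝ᵥ v) hx
  simp only [smul_dotProduct, one_dotProduct, hv, smul_eq_mul, mul_zero] at this
  exact (mul_eq_zero.mp this).resolve_left (by positivity)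

end completeLap

section Sparsifier

variable {V : Type*} [Fintype V] [DecidableEq V] {L Lp : Matrix V V ℝ}

theorem posSemidef_of_completeLap_le (h : (L - completeLap V).PosSemidef) : L.PosSemidef := by
  simpa using h.add posSemidef_completeLap

theorem mulVec_mulVec_eq_self_of_completeLap_le [Nonempty V] (h : (L - completeLap V).PosSemidef)
    (hMP : IsMoorePenrose L Lp) {v : V → ℝ} (hv : ∑ i, v i = 0) : L *ᵥ Lp *ᵥ v = v :=
  hMP.mulVec_mulVec_eq_self (isHermitian_iff_isSymm.mp (posSemidef_of_completeLap_le h).isHermitian)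
    fun _ hx => dotProduct_eq_zero_of_completeLap_mulVec_eq_zero hv
      (mulVec_eq_zero_of_posSemidef_sub posSemidef_completeLap h hx)

theorem sum_mulVec_eq_zero_of_le_completeLap {c : ℝ} (hL : L.PosSemidef)
    (h : (c • completeLap V - L).PosSemidef) (hMP : IsMoorePenrose L Lp) (v : V → ℝ) :
    ∑ i, (Lp *ᵥ v) i = 0 := by
  rw [← one_dotProduct]
  refine hMP.dotProduct_mulVec_eq_zero (mulVec_eq_zero_of_posSemidef_sub hL h ?_) v
  rw [smul_mulVec, completeLap_mulVec_one, smul_zero]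

end Sparsifier

theorem half_le_div_sq_and_div_sq_le {n ε K D N : ℝ} (hn : 0 < n) (hε : 0 ≤ ε)
    (hDN : D ^ 2 ≤ 2 * N) (hnN : n * N ≤ D) (hK : K ≤ (1 + ε) * (2 * n)) (hKD : 2 ^ 2 ≤ K * D) :
    1 / 2 ≤ N / D ^ 2 ∧ N / D ^ 2 ≤ (1 + ε) ^ 2 / 2 := by
  have hD₀ : 0 ≤ D := by nlinarith [sq_nonneg D]
  have hnD : 2 ≤ (1 + ε) * n * D := by nlinarith [mul_le_mul_of_nonneg_right hK hD₀]
  have hD : 0 < D := hD₀.lt_of_ne (by rintro rfl; norm_num at hnD)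
  constructor
  · rw [le_div_iff₀ (by positivity)]
    linarith
  · rw [div_le_div_iff₀ (by positivity) two_pos]
    nlinarith [mul_le_mul_of_nonneg_right hnD hD.le, mul_nonneg hε (sq_nonneg D)]

theorem polarization_of_sparsifier_general {n : ℕ} (ε : ℝ) (hε : 0 ≤ ε)
    (LC LH LHp : Matrix (Fin n) (Fin n) ℝ)
    (hLC : LC = (n : ℝ) • (1 : Matrix (Fin n) (Fin n) ℝ) - onesM (Fin n))
    (hlow : (LH - LC).PosSemidef)
    (hhigh : ((1 + ε) • LC - LH).PosSemidef)
    (hMP : IsMoorePenrose LH LHp)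
    (s0 s1 : Fin n) (hs : s0 ≠ s1) :
    (1 : ℝ) / 2 ≤
        (bvec s1 s0 ⬝ᵥ (LHp * LHp) *ᵥ bvec s1 s0) /
          (bvec s1 s0 ⬝ᵥ LHp *ᵥ bvec s1 s0) ^ 2 ∧
      (bvec s1 s0 ⬝ᵥ (LHp * LHp) *ᵥ bvec s1 s0) /
          (bvec s1 s0 ⬝ᵥ LHp *ᵥ bvec s1 s0) ^ 2 ≤ (1 + ε) ^ 2 / 2 := by
  have : Nonempty (Fin n) := ⟨s0⟩
  replace hLC : LC = completeLap (Fin n) := by rw [hLC, completeLap, Fintype.card_fin]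
  subst hLC
  set b := bvec s1 s0
  set y := LHp *ᵥ b
  have hb : ∑ i, b i = 0 := sum_bvec s1 s0
  have hbb : b ⬝ᵥ b = 2 := bvec_dotProduct_self hs.symm
  have hLH := posSemidef_of_completeLap_le hlow
  have hLHy : LH *ᵥ y = b := mulVec_mulVec_eq_self_of_completeLap_le hlow hMP hb
  have hy : ∑ i, y i = 0 := sum_mulVec_eq_zero_of_le_completeLap hLH hhigh hMP b
  have hnum : b ⬝ᵥ (LHp * LHp) *ᵥ b = y ⬝ᵥ y := by
    rw [← mulVec_mulVec, dotProduct_mulVec, ← mulVec_transpose,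
      (hMP.isSymm_s5 (isHermitian_iff_isSymm.mp hLH.isHermitian)).eq]
  have hnN : n * (y ⬝ᵥ y) ≤ b ⬝ᵥ y := by
    simpa [dotProduct_completeLap_mulVec, hy, hLHy, dotProduct_comm] using
      dotProduct_mulVec_le_of_posSemidef_sub hlow y
  have hbLHb : b ⬝ᵥ LH *ᵥ b ≤ (1 + ε) * (2 * n) := by
    simpa [smul_mulVec, dotProduct_completeLap_mulVec, hb, hbb, mul_comm] using
      dotProduct_mulVec_le_of_posSemidef_sub hhigh b
  have hCS := hLH.sq_dotProduct_mulVec_le b y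
  rw [hLHy, hbb, dotProduct_comm y b] at hCS
  have hby := PosSemidef.one.sq_dotProduct_mulVec_le b y
  simp only [one_mulVec, hbb] at hby
  rw [hnum]
  exact half_le_div_sq_and_div_sq_le (by exact_mod_cast s0.pos) hε hby hnN hbLHb hCS

theorem polarization_of_sparsifier {n : ℕ} (hn : 2 ≤ n) (ε : ℝ) (hε : 0 ≤ ε)
    (LC LH LHp : Matrix (Fin n) (Fin n) ℝ)
    (hLC : LC = (n : ℝ) • (1 : Matrix (Fin n) (Fin n) ℝ) - onesM (Fin n))
    (hlow : (LH - LC).PosSemidef)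
    (hhigh : ((1 + ε) • LC - LH).PosSemidef)
    (hMP : IsMoorePenrose LH LHp)
    (s0 s1 : Fin n) (hs : s0 ≠ s1) :
    (1 : ℝ) / 2 ≤
        (bvec s1 s0 ⬝ᵥ (LHp * LHp) *ᵥ bvec s1 s0) /
          (bvec s1 s0 ⬝ᵥ LHp *ᵥ bvec s1 s0) ^ 2 ∧
      (bvec s1 s0 ⬝ᵥ (LHp * LHp) *ᵥ bvec s1 s0) /
          (bvec s1 s0 ⬝ᵥ LHp *ᵥ bvec s1 s0) ^ 2 ≤ (1 + ε) ^ 2 / 2 :=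
  polarization_of_sparsifier_general ε hε LC LH LHp hLC hlow hhigh hMP s0 s1 hs
end
end

section
/- In the Friedkin-Johnsen model, as the uniform scaling factor a of the graph Laplacian tends to infinity, the steady state x̂' = (aL + K)⁻¹ B K 1 converges to the constant vector α·1, where α = (Σ_v κ_v x̂_v)/(Σ_v κ_v) is the κ-weighted average of the original steady state x̂ = (L+K)⁻¹ B K 1. -/
open Matrix

noncomputable section

/-!
Write `K = diagonal κ`, `b = BK1` and `r = b - α • κ`. Because `L` is symmetric with `L 1 = 0`,
the column sums of `a • L + K` are `κ`; applied to `x̂` this gives `κ ⬝ᵥ x̂ = ∑ b`, i.e. `∑ r = 0`.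
The deviation `y = (a • L + K)⁻¹ b - α 1` solves `(a • L + K) y = r`, hence `κ ⬝ᵥ y = ∑ r = 0`,
and therefore `(L + κ κᵀ + a⁻¹ • K) y = a⁻¹ • r`. Connectedness makes `L + κ κᵀ` positive
definite, so `y = a⁻¹ • (L + κ κᵀ + a⁻¹ • K)⁻¹ r` tends to `0 • (L + κ κᵀ)⁻¹ r = 0`.
-/

open Filter Topology

section Laplacian

variable {V : Type*} [Fintype V] [DecidableEq V] {w : V → V → ℝ}

theorem lapOf_mulVec_apply (hw0 : ∀ i, w i i = 0) (x : V → ℝ) (i : V) :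
    (lapOf w *ᵥ x) i = ∑ j, w i j * (x i - x j) := by
  have hdiag : ∑ j, (if i = j then ∑ k, w i k else 0) * x j = ∑ j, w i j * x i := by
    simp [Finset.sum_mul]
  have hoff : ∑ j, (if i = j then 0 else w i j) * x j = ∑ j, w i j * x j :=
    Finset.sum_congr rfl fun j _ => by
      by_cases h : i = j
      · simp [← h, hw0]
      · simp [h]
  calc (lapOf w *ᵥ x) i
      = ∑ j, ((if i = j then ∑ k, w i k else 0) * x j - (if i = j then 0 else w i j) * x j) :=
        Finset.sum_congr rfl fun j _ => by
          rcases eq_or_ne i j with rfl | h <;> simp [lapOf, *]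
    _ = ∑ j, w i j * (x i - x j) := by
        simp only [Finset.sum_sub_distrib, hdiag, hoff, mul_sub]

theorem lapOf_mulVec_const (hw0 : ∀ i, w i i = 0) (c : ℝ) : lapOf w *ᵥ (fun _ => c) = 0 := by
  ext i
  simp [lapOf_mulVec_apply hw0]

theorem isHermitian_lapOf (hwsymm : ∀ i j, w i j = w j i) : (lapOf w).IsHermitian := by
  ext i j
  by_cases h : i = j
  · subst h; rfl
  · simp [lapOf, h, Ne.symm h, hwsymm j i]

theorem two_mul_dotProduct_lapOf_mulVec (hw0 : ∀ i, w i i = 0)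
    (hwsymm : ∀ i j, w i j = w j i) (x : V → ℝ) :
    2 * (x ⬝ᵥ lapOf w *ᵥ x) = ∑ i, ∑ j, w i j * (x i - x j) ^ 2 := by
  have hform : x ⬝ᵥ lapOf w *ᵥ x = ∑ i, ∑ j, w i j * (x i * (x i - x j)) := by
    simp only [dotProduct, lapOf_mulVec_apply hw0, Finset.mul_sum]
    exact Finset.sum_congr rfl fun i _ => Finset.sum_congr rfl fun j _ => by ring
  have hswap : x ⬝ᵥ lapOf w *ᵥ x = ∑ i, ∑ j, w i j * (x j * (x j - x i)) := by
    rw [hform, Finset.sum_comm]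
    simp only [hwsymm]
  rw [two_mul]
  nth_rewrite 1 [hform]
  rw [hswap, ← Finset.sum_add_distrib]
  refine Finset.sum_congr rfl fun i _ => ?_
  rw [← Finset.sum_add_distrib]
  exact Finset.sum_congr rfl fun j _ => by ring

theorem posSemidef_lapOf (hw0 : ∀ i, w i i = 0) (hwsymm : ∀ i j, w i j = w j i)
    (hwnn : ∀ i j, 0 ≤ w i j) : (lapOf w).PosSemidef := by
  refine PosSemidef.of_dotProduct_mulVec_nonneg (isHermitian_lapOf hwsymm) fun x => ?_
  have h := two_mul_dotProduct_lapOf_mulVec hw0 hwsymm x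
  have : 0 ≤ ∑ i, ∑ j, w i j * (x i - x j) ^ 2 :=
    Finset.sum_nonneg fun i _ => Finset.sum_nonneg fun j _ => mul_nonneg (hwnn i j) (sq_nonneg _)
  rw [star_trivial]
  linarith

end Laplacian

section SteadyState

variable {ι : Type*} {L : Matrix ι ι ℝ} {κ : ι → ℝ}

theorem Matrix.PosSemidef.posDef_add_vecMulVec_self [Fintype ι] (hL : L.PosSemidef)
    (hker : ∀ x, L *ᵥ x = 0 → ∃ c : ℝ, x = fun _ => c) (hκ : ∀ i, 0 < κ i) :
    (L + vecMulVec κ κ).PosDef := by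
  have hκκ : (vecMulVec κ κ).PosSemidef := by
    simpa using posSemidef_vecMulVec_self_star κ
  refine PosDef.of_dotProduct_mulVec_pos (hL.isHermitian.add hκκ.isHermitian) fun x hx => ?_
  have hquad : star x ⬝ᵥ (L + vecMulVec κ κ) *ᵥ x = star x ⬝ᵥ L *ᵥ x + (κ ⬝ᵥ x) ^ 2 := by
    rw [add_mulVec, dotProduct_add, vecMulVec_mulVec]
    simp [dotProduct_comm x κ, sq]
  have hLx := hL.dotProduct_mulVec_nonneg x
  refine hquad ▸ lt_of_le_of_ne (by positivity) fun hzero => hx ?_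
  obtain ⟨c, rfl⟩ := hker x ((hL.dotProduct_mulVec_zero_iff x).mp (by nlinarith))
  obtain ⟨i, hi⟩ := Function.ne_iff.mp hx
  have hsum : c * ∑ j, κ j = 0 := by
    have : κ ⬝ᵥ (fun _ => c) = 0 := by nlinarith
    simpa [dotProduct, mul_comm, Finset.mul_sum] using this
  have hpos : 0 < ∑ j, κ j := Finset.sum_pos (fun j _ => hκ j) ⟨i, Finset.mem_univ i⟩
  obtain rfl : c = 0 := (mul_eq_zero.mp hsum).resolve_right hpos.ne'
  rfl

theorem Matrix.PosSemidef.posDef_smul_add_diagonal [DecidableEq ι] (hL : L.PosSemidef)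
    (hκ : ∀ i, 0 < κ i) {a : ℝ} (ha : 0 ≤ a) : (a • L + diagonal κ).PosDef :=
  PosDef.posSemidef_add (hL.smul ha) (PosDef.diagonal hκ)

variable [Fintype ι] [DecidableEq ι]

theorem smul_add_diagonal_mulVec_const (hL1 : L *ᵥ (fun _ => 1) = 0) (a c : ℝ) :
    (a • L + diagonal κ) *ᵥ (fun _ => c) = c • κ := by
  have hLc : L *ᵥ (fun _ => c) = 0 := by
    rw [show (fun _ : ι => c) = c • fun _ => 1 by ext; simp, mulVec_smul, hL1, smul_zero]
  ext i
  simp [add_mulVec, smul_mulVec, hLc, mulVec_diagonal, mul_comm]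

theorem sum_smul_add_diagonal_mulVec (hL : L.IsHermitian) (hL1 : L *ᵥ (fun _ => 1) = 0)
    (a : ℝ) (y : ι → ℝ) : ∑ i, ((a • L + diagonal κ) *ᵥ y) i = κ ⬝ᵥ y := by
  have h1L : (fun _ => 1) ᵥ* L = 0 := by
    rw [← mulVec_transpose, ← conjTranspose_eq_transpose_of_trivial, hL.eq, hL1]
  have h1K : (fun _ => 1) ᵥ* diagonal κ = κ := by
    ext i; simp [vecMul_diagonal]
  calc ∑ i, ((a • L + diagonal κ) *ᵥ y) i = (fun _ => 1) ⬝ᵥ (a • L + diagonal κ) *ᵥ y := by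
        simp [dotProduct]
    _ = κ ⬝ᵥ y := by
        rw [dotProduct_mulVec, vecMul_add, vecMul_smul, h1L, h1K, smul_zero, zero_add]

theorem add_vecMulVec_add_inv_smul_diagonal_mulVec {a : ℝ} (ha : a ≠ 0) {y r : ι → ℝ}
    (h : (a • L + diagonal κ) *ᵥ y = r) (hy : κ ⬝ᵥ y = 0) :
    (L + vecMulVec κ κ + a⁻¹ • diagonal κ) *ᵥ y = a⁻¹ • r := by
  rw [← h, add_mulVec, add_mulVec, vecMulVec_mulVec, hy, add_mulVec, smul_mulVec, smul_mulVec,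
    smul_add, smul_smul, inv_mul_cancel₀ ha, one_smul]
  simp

theorem tendsto_inv_add_smul_mulVec {A B : Matrix ι ι ℝ} (hA : IsUnit A.det) (r : ι → ℝ) :
    Tendsto (fun t : ℝ => (A + t • B)⁻¹ *ᵥ r) (𝓝 0) (𝓝 (A⁻¹ *ᵥ r)) := by
  have hdet : ContinuousAt Ring.inverse A.det := by
    simpa [Ring.inverse_eq_inv'] using continuousAt_inv₀ hA.ne_zero
  have hinv : ContinuousAt Inv.inv A := continuousAt_matrix_inv A hdet
  have hpath : Tendsto (fun t : ℝ => A + t • B) (𝓝 0) (𝓝 A) := by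
    have : Continuous fun t : ℝ => A + t • B := by fun_prop
    simpa using this.tendsto 0
  have hmul : Continuous fun M : Matrix ι ι ℝ => M *ᵥ r :=
    continuous_id.matrix_mulVec continuous_const
  exact (hmul.tendsto _).comp (hinv.tendsto.comp hpath)

theorem tendsto_inv_smul_add_diagonal_mulVec (hL : L.PosSemidef)
    (hL1 : L *ᵥ (fun _ => 1) = 0) (hker : ∀ x, L *ᵥ x = 0 → ∃ c : ℝ, x = fun _ => c)
    (hκ : ∀ i, 0 < κ i) {b : ι → ℝ} {α : ℝ} (hα : α * ∑ i, κ i = ∑ i, b i) :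
    Tendsto (fun a : ℝ => (a • L + diagonal κ)⁻¹ *ᵥ b) atTop (𝓝 fun _ => α) := by
  set M : ℝ → Matrix ι ι ℝ := fun t => L + vecMulVec κ κ + t • diagonal κ
  have hM0 : (L + vecMulVec κ κ).PosDef := hL.posDef_add_vecMulVec_self hker hκ
  have hM : ∀ t, 0 ≤ t → IsUnit (M t).det := fun t ht =>
    (isUnit_iff_isUnit_det _).mp (hM0.add_posSemidef ((PosSemidef.diagonal fun i =>
      (hκ i).le).smul ht)).isUnit
  have hdev : ∀ a : ℝ, 0 < a →
      (a • L + diagonal κ)⁻¹ *ᵥ b = (fun _ => α) + a⁻¹ • ((M a⁻¹)⁻¹ *ᵥ (b - α • κ)) := by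
    intro a ha
    have hA := (isUnit_iff_isUnit_det _).mp (hL.posDef_smul_add_diagonal hκ ha.le).isUnit
    set y := (a • L + diagonal κ)⁻¹ *ᵥ b - fun _ => α
    have hy : (a • L + diagonal κ) *ᵥ y = b - α • κ := by
      rw [mulVec_sub, mulVec_mulVec, mul_nonsing_inv _ hA, one_mulVec,
        smul_add_diagonal_mulVec_const hL1]
    have hκy : κ ⬝ᵥ y = 0 := by
      rw [← sum_smul_add_diagonal_mulVec hL.isHermitian hL1 a, hy]
      simp only [Pi.sub_apply, Pi.smul_apply, smul_eq_mul, Finset.sum_sub_distrib,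
        ← Finset.mul_sum, hα, sub_self]
    have hMy := add_vecMulVec_add_inv_smul_diagonal_mulVec ha.ne' hy hκy
    rw [← mulVec_smul, ← hMy, mulVec_mulVec, nonsing_inv_mul _ (hM _ (inv_nonneg.mpr ha.le)),
      one_mulVec]
    exact (add_sub_cancel _ _).symm
  have hlim : Tendsto (fun a : ℝ => a⁻¹ • ((M a⁻¹)⁻¹ *ᵥ (b - α • κ))) atTop (𝓝 0) := by
    have hinv : Tendsto (fun a : ℝ => (M a⁻¹)⁻¹ *ᵥ (b - α • κ)) atTop
        (𝓝 ((L + vecMulVec κ κ)⁻¹ *ᵥ (b - α • κ))) :=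
      (tendsto_inv_add_smul_mulVec ((isUnit_iff_isUnit_det _).mp hM0.isUnit)
        (b - α • κ)).comp tendsto_inv_atTop_zero
    simpa using tendsto_inv_atTop_zero.smul hinv
  refine Tendsto.congr' ?_ (by simpa using tendsto_const_nhds.add hlim)
  filter_upwards [eventually_gt_atTop 0] with a ha
  exact (hdev a ha).symm

end SteadyState

theorem fj_steady_state_limit_general {n : ℕ}
    (w : Fin n → Fin n → ℝ) (L : Matrix (Fin n) (Fin n) ℝ)
    (κ β : Fin n → ℝ)
    (hw0 : ∀ i, w i i = 0) (hwsymm : ∀ i j, w i j = w j i) (hwnn : ∀ i j, 0 ≤ w i j)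
    (hL : L = lapOf w)
    (hconn : ∀ x : Fin n → ℝ, L *ᵥ x = 0 → ∃ c : ℝ, x = fun _ => c)
    (hκ : ∀ v, 0 < κ v)
    (xhat : Fin n → ℝ)
    (hx : xhat = (L + diagonal κ)⁻¹ *ᵥ ((diagonal β * diagonal κ) *ᵥ fun _ => 1))
    (α : ℝ) (hα : α = (∑ v, κ v * xhat v) / (∑ v, κ v)) :
    Filter.Tendsto
      (fun a : ℝ => (a • L + diagonal κ)⁻¹ *ᵥ ((diagonal β * diagonal κ) *ᵥ fun _ => 1))
      Filter.atTop (nhds (fun _ => α)) := by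
  have hLpsd : L.PosSemidef := hL ▸ posSemidef_lapOf hw0 hwsymm hwnn
  have hL1 : L *ᵥ (fun _ => 1) = 0 := hL ▸ lapOf_mulVec_const hw0 1
  have hLK : IsUnit (L + diagonal κ).det := by
    have := hLpsd.posDef_smul_add_diagonal hκ zero_le_one
    rw [one_smul] at this
    exact (isUnit_iff_isUnit_det _).mp this.isUnit
  have hxhat : (L + diagonal κ) *ᵥ xhat = (diagonal β * diagonal κ) *ᵥ fun _ => 1 := by
    rw [hx, mulVec_mulVec, mul_nonsing_inv _ hLK, one_mulVec]
  have hκx : ∑ v, κ v * xhat v = ∑ v, ((diagonal β * diagonal κ) *ᵥ fun _ => 1) v := by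
    have := sum_smul_add_diagonal_mulVec (κ := κ) hLpsd.isHermitian hL1 1 xhat
    rw [one_smul, hxhat] at this
    exact this.symm
  refine tendsto_inv_smul_add_diagonal_mulVec hLpsd hL1 hconn hκ ?_
  rcases isEmpty_or_nonempty (Fin n) with _ | _
  · simp
  rw [hα, div_mul_cancel₀ _ (Finset.sum_pos (fun v _ => hκ v) Finset.univ_nonempty).ne', hκx]

theorem fj_steady_state_limit {n : ℕ}
    (w : Fin n → Fin n → ℝ) (L : Matrix (Fin n) (Fin n) ℝ)
    (κ β : Fin n → ℝ)
    (hw0 : ∀ i, w i i = 0) (hwsymm : ∀ i j, w i j = w j i) (hwnn : ∀ i j, 0 ≤ w i j)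
    (hL : L = lapOf w)
    (hconn : ∀ x : Fin n → ℝ, L *ᵥ x = 0 → ∃ c : ℝ, x = fun _ => c)
    (hκ : ∀ v, 0 < κ v) (hβ : ∀ v, β v ∈ Set.Icc (0 : ℝ) 1)
    (xhat : Fin n → ℝ)
    (hx : xhat = (L + diagonal κ)⁻¹ *ᵥ ((diagonal β * diagonal κ) *ᵥ fun _ => 1))
    (α : ℝ) (hα : α = (∑ v, κ v * xhat v) / (∑ v, κ v)) :
    Filter.Tendsto
      (fun a : ℝ => (a • L + diagonal κ)⁻¹ *ᵥ ((diagonal β * diagonal κ) *ᵥ fun _ => 1))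
      Filter.atTop (nhds (fun _ => α)) :=
  fj_steady_state_limit_general w L κ β hw0 hwsymm hwnn hL hconn hκ xhat hx α hα
end
end

section
/- In the Friedkin-Johnsen model, the weighted polarization satisfies P̃ = Σ_v κ_v (x̂_v − α)² = s̃ᵀ (L+K)⁻¹ K (L+K)⁻¹ s̃, where x̂ = (L+K)⁻¹ s, s = BK1, α = (Σ_v κ_v x̂_v)/(Σ_v κ_v), and s̃ = (I − κ 1ᵀ/(Σ_v κ_v))ᵀ s. -/
open Matrix

noncomputable section

lemma lapOf_repr {n : ℕ} (w : Fin n → Fin n → ℝ) (hw0 : ∀ i, w i i = 0) :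
    lapOf w = diagonal (fun i => ∑ k, w i k) - Matrix.of w := by
  ext i j
  by_cases h : i = j
  · subst h; simp [lapOf, hw0]
  · simp [lapOf, h, diagonal_apply_ne _ h]

lemma lap_mulVec {n : ℕ} (w : Fin n → Fin n → ℝ) (hw0 : ∀ i, w i i = 0)
    (x : Fin n → ℝ) (i : Fin n) :
    (lapOf w *ᵥ x) i = ∑ k, w i k * (x i - x k) := by
  rw [lapOf_repr w hw0, Matrix.sub_mulVec]
  simp [mulVec_diagonal, Matrix.mulVec, dotProduct, mul_sub,
    Finset.sum_sub_distrib, Finset.sum_mul, diagonal_apply, ite_mul,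
    Finset.sum_ite_eq]

lemma lap_quad {n : ℕ} (w : Fin n → Fin n → ℝ) (hw0 : ∀ i, w i i = 0)
    (hwsymm : ∀ i j, w i j = w j i) (x : Fin n → ℝ) :
    x ⬝ᵥ (lapOf w *ᵥ x) = (1/2) * ∑ i, ∑ k, w i k * (x i - x k)^2 := by
  have hA : x ⬝ᵥ (lapOf w *ᵥ x) = ∑ i, ∑ k, w i k * (x i * (x i - x k)) := by
    simp only [dotProduct, lap_mulVec w hw0, Finset.mul_sum]
    exact Finset.sum_congr rfl fun i _ => Finset.sum_congr rfl fun k _ => by ring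
  have hB : ∑ i, ∑ k, w i k * (x k * (x i - x k))
      = - ∑ i, ∑ k, w i k * (x i * (x i - x k)) := by
    rw [Finset.sum_comm, ← Finset.sum_neg_distrib]
    refine Finset.sum_congr rfl fun k _ => ?_
    rw [← Finset.sum_neg_distrib]
    refine Finset.sum_congr rfl fun i _ => ?_
    rw [hwsymm i k]; ring
  have hsplit : ∑ i, ∑ k, w i k * (x i - x k)^2
      = (∑ i, ∑ k, w i k * (x i * (x i - x k)))
        - ∑ i, ∑ k, w i k * (x k * (x i - x k)) := by
    rw [← Finset.sum_sub_distrib]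
    refine Finset.sum_congr rfl fun i _ => ?_
    rw [← Finset.sum_sub_distrib]
    exact Finset.sum_congr rfl fun k _ => by ring
  rw [hA, hsplit, hB]; ring

lemma lap_quad_nonneg {n : ℕ} (w : Fin n → Fin n → ℝ) (hw0 : ∀ i, w i i = 0)
    (hwsymm : ∀ i j, w i j = w j i) (hwnn : ∀ i j, 0 ≤ w i j) (x : Fin n → ℝ) :
    0 ≤ x ⬝ᵥ (lapOf w *ᵥ x) := by
  rw [lap_quad w hw0 hwsymm]
  have : 0 ≤ ∑ i, ∑ k, w i k * (x i - x k)^2 :=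
    Finset.sum_nonneg fun i _ => Finset.sum_nonneg fun k _ =>
      mul_nonneg (hwnn i k) (sq_nonneg _)
  linarith

theorem fj_weighted_polarization_identity {n : ℕ}
    (w : Fin n → Fin n → ℝ) (L : Matrix (Fin n) (Fin n) ℝ)
    (κ β : Fin n → ℝ)
    (hw0 : ∀ i, w i i = 0) (hwsymm : ∀ i j, w i j = w j i) (hwnn : ∀ i j, 0 ≤ w i j)
    (hL : L = lapOf w)
    (hconn : ∀ x : Fin n → ℝ, L *ᵥ x = 0 → ∃ c : ℝ, x = fun _ => c)
    (hκ : ∀ v, 0 < κ v) (hβ : ∀ v, β v ∈ Set.Icc (0 : ℝ) 1)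
    (s stilde xhat : Fin n → ℝ)
    (hsdef : s = (diagonal β * diagonal κ) *ᵥ fun _ => 1)
    (hstilde : stilde = s - ((∑ v, s v) / (∑ v, κ v)) • κ)
    (hx : xhat = (L + diagonal κ)⁻¹ *ᵥ s)
    (α : ℝ) (hα : α = (∑ v, κ v * xhat v) / (∑ v, κ v)) :
    ∑ v, κ v * (xhat v - α) ^ 2 =
      stilde ⬝ᵥ ((L + diagonal κ)⁻¹ * diagonal κ * (L + diagonal κ)⁻¹) *ᵥ stilde := by
  set M := L + diagonal κ with hM
  -- diagonal quadratic form
  have hdiagquad : ∀ z : Fin n → ℝ, z ⬝ᵥ (diagonal κ *ᵥ z) = ∑ v, κ v * (z v)^2 := by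
    intro z
    simp only [dotProduct, mulVec_diagonal]
    exact Finset.sum_congr rfl fun v _ => by ring
  -- M is symmetric
  have hMsymm : Mᵀ = M := by
    rw [hM, transpose_add, diagonal_transpose, hL]
    congr 1
    ext i j
    by_cases h : i = j
    · subst h; rfl
    · simp [lapOf, transpose_apply, h, Ne.symm h, hwsymm i j]
  -- kernel of M is trivial
  have hker : ∀ z : Fin n → ℝ, M *ᵥ z = 0 → z = 0 := by
    intro z hz
    have hq : z ⬝ᵥ (M *ᵥ z) = 0 := by rw [hz]; simp
    rw [hM, Matrix.add_mulVec, dotProduct_add, hdiagquad] at hq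
    have h1 : 0 ≤ z ⬝ᵥ (L *ᵥ z) := hL ▸ lap_quad_nonneg w hw0 hwsymm hwnn z
    have h2 : ∀ v ∈ Finset.univ, 0 ≤ κ v * (z v)^2 := fun v _ =>
      mul_nonneg (hκ v).le (sq_nonneg _)
    have h3 : ∑ v, κ v * (z v)^2 = 0 := le_antisymm (by linarith) (Finset.sum_nonneg h2)
    funext v
    have := (Finset.sum_eq_zero_iff_of_nonneg h2).mp h3 v (Finset.mem_univ v)
    have hzv : (z v)^2 = 0 := by
      rcases mul_eq_zero.mp this with h | h
      · exact absurd h (hκ v).ne'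
      · exact h
    simpa using pow_eq_zero_iff (n := 2) two_ne_zero |>.mp hzv
  -- M is a unit
  have hinj : Function.Injective (M.mulVec) := by
    intro a b hab
    have : M *ᵥ (a - b) = 0 := by rw [Matrix.mulVec_sub, hab, sub_self]
    have := hker _ this
    exact sub_eq_zero.mp this
  have hunit : IsUnit M := mulVec_injective_iff_isUnit.mp hinj
  have hdet : IsUnit M.det := (isUnit_iff_isUnit_det M).mp hunit
  have hMMinv : M * M⁻¹ = 1 := mul_nonsing_inv M hdet
  have hMinvM : M⁻¹ * M = 1 := nonsing_inv_mul M hdet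
  -- M *ᵥ 1 = κ
  have hMone : M *ᵥ (fun _ => 1) = κ := by
    rw [hM, Matrix.add_mulVec]
    have hL1 : L *ᵥ (fun _ => (1:ℝ)) = 0 := by
      funext i
      rw [hL]
      simp [lap_mulVec w hw0]
    rw [hL1]
    funext i
    simp [mulVec_diagonal]
  -- M *ᵥ xhat = s
  have hMx : M *ᵥ xhat = s := by
    rw [hx, Matrix.mulVec_mulVec, hMMinv, Matrix.one_mulVec]
  -- sum identity
  have hsum : ∑ v, s v = ∑ v, κ v * xhat v := by
    have h1 : ∑ v, s v = (fun _ => (1:ℝ)) ⬝ᵥ s := by simp [dotProduct]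
    rw [h1, ← hMx, Matrix.dotProduct_mulVec, ← hMsymm, Matrix.vecMul_transpose, hMone]
    simp [dotProduct]
  -- y = xhat - α • 1
  set y : Fin n → ℝ := xhat - α • (fun _ => (1:ℝ)) with hy
  have hMy : M *ᵥ y = stilde := by
    rw [hy, Matrix.mulVec_sub, Matrix.mulVec_smul, hMx, hMone, hstilde, hsum, hα]
  have hyv : ∀ v, y v = xhat v - α := fun v => by simp [hy]
  -- conclude
  have hvm : M *ᵥ y = y ᵥ* M := by
    nth_rewrite 1 [← hMsymm]
    rw [Matrix.mulVec_transpose]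
  have hMA : M * (M⁻¹ * diagonal κ * M⁻¹) = diagonal κ * M⁻¹ := by
    rw [← mul_assoc, ← mul_assoc, hMMinv, one_mul]
  rw [← hMy, Matrix.dotProduct_mulVec, hvm, Matrix.vecMul_vecMul, hMA,
    ← Matrix.dotProduct_mulVec, ← hvm, Matrix.mulVec_mulVec, mul_assoc, hMinvM, mul_one,
    hdiagquad]
  exact Finset.sum_congr rfl fun v _ => by rw [hyv v]
end
end
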